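/- For every nonnegative integer n and μ > -1/2, one has p_{2n+1,μ}(1,1) = 2·p_{2n,μ}(1,1), i.e. Σ_{k=0}^{2n+1} C_μ(2n+1,k) = 2·Σ_{k=0}^{2n} C_μ(2n,k). -/

import Mathlib

open Finset

/-- The μ-deformed factorial function γ_μ. -/
noncomputable def gammaMu (μ : ℝ) : ℕ → ℝ
  | 0 => 1
  | n + 1 => ((n + 1 : ℝ) + 2 * μ * (if Odd (n + 1) then 1 else 0)) * gammaMu μ n

/-- The μ-deformed binomial coefficient C_μ(n,k), zero outside 0 ≤ k ≤ n. -/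
noncomputable def binomMu (μ : ℝ) (n : ℕ) (k : ℤ) : ℝ :=
  if 0 ≤ k ∧ k ≤ (n : ℤ) then gammaMu μ n / (gammaMu μ (n - k.toNat) * gammaMu μ k.toNat) else 0

/-- The n-th μ-deformed binomial polynomial p_{n,μ}(x,y). -/
noncomputable def pMu (μ : ℝ) (n : ℕ) (x y : ℂ) : ℂ :=
  ∑ k ∈ Finset.range (n + 1), (binomMu μ n k : ℂ) * x ^ k * y ^ (n - k)

/-- The μ-deformed exponential function. -/
noncomputable def expMu (μ : ℝ) (z : ℂ) : ℂ :=
  ∑' n : ℕ, z ^ n / (gammaMu μ n : ℂ)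

/-- The Bessel function of the first kind of order ν, for positive real argument. -/
noncomputable def besselJ (ν x : ℝ) : ℝ :=
  ∑' m : ℕ, ((-1) ^ m / (Nat.factorial m * Real.Gamma (ν + m + 1))) * (x / 2) ^ ((2 * m : ℝ) + ν)

/-!
Write `[m] = m + 2μθ(m)`, so that `γ_μ(m + 1) = [m + 1] γ_μ(m)`. When `a + b` is odd exactly one
of `a`, `b` is odd, hence `[a] + [b] = [a + b]`, and this is precisely what makes the Pascal rule
`C_μ(N, k) = C_μ(N - 1, k) + C_μ(N - 1, k - 1)` hold for odd `N`. Summing it over `k` counts every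
coefficient of row `N - 1` twice.
-/

noncomputable def muNat (μ : ℝ) (m : ℕ) : ℝ :=
  m + 2 * μ * (if Odd m then 1 else 0)

theorem muNat_add_of_odd (μ : ℝ) {a b : ℕ} (hab : Odd (a + b)) :
    muNat μ a + muNat μ b = muNat μ (a + b) := by
  rcases Nat.even_or_odd a with ha | ha
  · have hb : Odd b := (Nat.odd_add'.mp hab).mpr ha
    rw [muNat, muNat, muNat, if_neg (Nat.not_odd_iff_even.mpr ha), if_pos hb, if_pos hab]
    push_cast
    ring
  · have hb : ¬ Odd b := Nat.not_odd_iff_even.mpr ((Nat.odd_add.mp hab).mp ha)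
    rw [muNat, muNat, muNat, if_pos ha, if_neg hb, if_pos hab]
    push_cast
    ring

theorem muNat_pos {μ : ℝ} (hμ : -(1/2 : ℝ) < μ) {m : ℕ} (hm : 0 < m) : 0 < muNat μ m := by
  have : (1 : ℝ) ≤ m := by exact_mod_cast hm
  unfold muNat
  split_ifs <;> linarith

theorem gammaMu_succ (μ : ℝ) (n : ℕ) : gammaMu μ (n + 1) = muNat μ (n + 1) * gammaMu μ n := by
  simp [gammaMu, muNat]

theorem gammaMu_pos {μ : ℝ} (hμ : -(1/2 : ℝ) < μ) (n : ℕ) : 0 < gammaMu μ n := by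
  induction n with
  | zero => simp [gammaMu]
  | succ n ih => rw [gammaMu_succ]; exact mul_pos (muNat_pos hμ n.succ_pos) ih

theorem gammaMu_div_pascal {μ : ℝ} (hμ : -(1/2 : ℝ) < μ) {a b : ℕ} (hab : Odd (a + b)) :
    gammaMu μ (a + b + 2) / (gammaMu μ (a + 1) * gammaMu μ (b + 1)) =
      gammaMu μ (a + b + 1) / (gammaMu μ a * gammaMu μ (b + 1)) +
        gammaMu μ (a + b + 1) / (gammaMu μ (a + 1) * gammaMu μ b) := by
  have hsum : muNat μ (a + 1) + muNat μ (b + 1) = muNat μ (a + b + 2) := by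
    rw [show a + b + 2 = (a + 1) + (b + 1) by ring]
    exact muNat_add_of_odd μ (by convert hab.add_even even_two using 1; ring)
  rw [show a + b + 2 = (a + b + 1) + 1 by ring, gammaMu_succ, gammaMu_succ μ a, gammaMu_succ μ b,
    ← hsum]
  have := gammaMu_pos hμ a
  have := gammaMu_pos hμ b
  have := muNat_pos hμ a.succ_pos
  have := muNat_pos hμ b.succ_pos
  field_simp

theorem binomMu_natCast {μ : ℝ} {N k : ℕ} (hk : k ≤ N) :
    binomMu μ N k = gammaMu μ N / (gammaMu μ (N - k) * gammaMu μ k) := by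
  rw [binomMu, if_pos ⟨k.cast_nonneg, by exact_mod_cast hk⟩, Int.toNat_natCast]

theorem binomMu_of_lt_zero (μ : ℝ) (N : ℕ) {k : ℤ} (hk : k < 0) : binomMu μ N k = 0 :=
  if_neg (by omega)

theorem binomMu_of_gt (μ : ℝ) {N : ℕ} {k : ℤ} (hk : (N : ℤ) < k) : binomMu μ N k = 0 :=
  if_neg (by omega)

theorem binomMu_zero {μ : ℝ} (hμ : -(1/2 : ℝ) < μ) (N : ℕ) : binomMu μ N 0 = 1 := by
  rw [← Nat.cast_zero, binomMu_natCast N.zero_le, Nat.sub_zero, gammaMu, mul_one,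
    div_self (gammaMu_pos hμ N).ne']

theorem binomMu_self {μ : ℝ} (hμ : -(1/2 : ℝ) < μ) (N : ℕ) : binomMu μ N N = 1 := by
  rw [binomMu_natCast le_rfl, Nat.sub_self, gammaMu, one_mul, div_self (gammaMu_pos hμ N).ne']

theorem binomMu_pascal {μ : ℝ} (hμ : -(1/2 : ℝ) < μ) {N : ℕ} (hN : Odd (N + 1)) (k : ℤ) :
    binomMu μ (N + 1) k = binomMu μ N k + binomMu μ N (k - 1) := by
  rcases lt_trichotomy k 0 with hk | rfl | hk
  · simp [binomMu_of_lt_zero, hk, show k - 1 < 0 by omega]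
  · simp [binomMu_zero hμ, binomMu_of_lt_zero]
  rcases lt_trichotomy k (N + 1) with hkN | rfl | hkN
  · obtain ⟨j, rfl⟩ : ∃ j : ℕ, k = j + 1 := ⟨(k - 1).toNat, by omega⟩
    obtain ⟨a, rfl⟩ : ∃ a : ℕ, N = a + j + 1 := ⟨N - j - 1, by omega⟩
    rw [add_sub_cancel_right, ← Nat.cast_add_one, binomMu_natCast (by omega),
      binomMu_natCast (by omega), binomMu_natCast (by omega),
      show a + j + 1 + 1 - (j + 1) = a + 1 by omega, show a + j + 1 - (j + 1) = a by omega,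
      show a + j + 1 - j = a + 1 by omega, show a + j + 1 + 1 = a + j + 2 by ring]
    exact gammaMu_div_pascal hμ (by simpa [Nat.odd_add_one, parity_simps] using hN)
  · rw [← Nat.cast_add_one, binomMu_self hμ, binomMu_of_gt μ (by omega), Nat.cast_add_one,
      add_sub_cancel_right, binomMu_self hμ, zero_add]
  · simp [binomMu_of_gt, hkN, show (N : ℤ) < k by omega, show (N : ℤ) < k - 1 by omega]

theorem sum_binomMu_succ_of_odd {μ : ℝ} (hμ : -(1/2 : ℝ) < μ) {N : ℕ} (hN : Odd (N + 1)) :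
    ∑ k ∈ range (N + 2), binomMu μ (N + 1) k = 2 * ∑ k ∈ range (N + 1), binomMu μ N k := by
  have h_last : ∑ k ∈ range (N + 2), binomMu μ N k = ∑ k ∈ range (N + 1), binomMu μ N k := by
    rw [sum_range_succ, binomMu_of_gt μ (by omega), add_zero]
  have h_shift : ∑ k ∈ range (N + 2), binomMu μ N ((k : ℤ) - 1) =
      ∑ k ∈ range (N + 1), binomMu μ N k := by
    rw [sum_range_succ', Nat.cast_zero, binomMu_of_lt_zero μ N (by norm_num), add_zero]
    simp only [Nat.cast_add_one, add_sub_cancel_right]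
  simp only [binomMu_pascal hμ hN, sum_add_distrib, h_last, h_shift, two_mul]

theorem pMu_one_one (μ : ℝ) (N : ℕ) :
    pMu μ N 1 1 = ((∑ k ∈ range (N + 1), binomMu μ N k : ℝ) : ℂ) := by
  simp [pMu]

theorem pMu_sum_odd_eq_two_mul (μ : ℝ) (hμ : -(1/2 : ℝ) < μ) (n : ℕ) :
    pMu μ (2 * n + 1) 1 1 = 2 * pMu μ (2 * n) 1 1 := by
  rw [pMu_one_one, pMu_one_one, sum_binomMu_succ_of_odd hμ (by simp), Complex.ofReal_mul]
  norm_num
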